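/- Define g(z) = Σ_{n=K+2}^∞ 4n·J_n(z)² for an integer K ≥ 0. Then g is differentiable on (0,∞) with g'(z) = 2z·(J_{K+1}(z)² + J_{K+2}(z)²). -/

import Mathlib

/-!
Termwise differentiation of the power series gives `J_{k+1}' = (J_k - J_{k+2}) / 2`, and comparing
coefficients gives the recurrence `x (J_k + J_{k+2}) = 2 (k + 1) J_{k+1}`. Together they turn the
derivative of `4 k J_k²` into `2 x (J_{k-1}² - J_{k+1}²)`, so the differentiated tail series
telescopes to `2 x (J_{K+1}² + J_{K+2}²)`. Differentiating the tail termwise is legitimate on every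
ball `|x| < R`, where `J_k(x)² ≤ exp (R² / 2) (R² / 4)^k / k!`.
-/

noncomputable def besselJ (n : ℕ) (z : ℝ) : ℝ :=
  ∑' m : ℕ, (-1 : ℝ) ^ m / (m.factorial * (m + n).factorial) * (z / 2) ^ (2 * m + n)

open scoped Nat

noncomputable def besselTerm (n m : ℕ) (x : ℝ) : ℝ :=
  (-1 : ℝ) ^ m / (m ! * (m + n)!) * (x / 2) ^ (2 * m + n)

lemma besselJ_eq_tsum (n : ℕ) (x : ℝ) : besselJ n x = ∑' m, besselTerm n m x := rfl

/- At `m + 1` this is `-besselTerm (n + 2) m`, rewritten over the monomial `(x / 2) ^ (2 * m + n)`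
of `besselTerm n m`, so that the Bessel recurrences hold term by term. -/
noncomputable def besselShiftTerm (n m : ℕ) (x : ℝ) : ℝ :=
  (-1 : ℝ) ^ m * m / (m ! * (m + n + 1)!) * (x / 2) ^ (2 * m + n)

lemma abs_mul_half_pow_le {a x R : ℝ} {m n : ℕ} (ha : |a| ≤ 1 / (m ! * n !)) (hx : |x| ≤ R) :
    |a * (x / 2) ^ (2 * m + n)| ≤ (R / 2) ^ n / n ! * (((R / 2) ^ 2) ^ m / m !) := by
  have hpow : |x / 2| ^ (2 * m + n) ≤ (R / 2) ^ (2 * m + n) := by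
    gcongr
    rw [abs_div, abs_two]
    linarith
  calc |a * (x / 2) ^ (2 * m + n)| = |a| * |x / 2| ^ (2 * m + n) := by rw [abs_mul, abs_pow]
    _ ≤ 1 / (m ! * n !) * (R / 2) ^ (2 * m + n) := by gcongr
    _ = (R / 2) ^ n / n ! * (((R / 2) ^ 2) ^ m / m !) := by rw [← pow_mul, pow_add]; ring

lemma abs_besselTerm_le {x R : ℝ} (hx : |x| ≤ R) (n m : ℕ) :
    |besselTerm n m x| ≤ (R / 2) ^ n / n ! * (((R / 2) ^ 2) ^ m / m !) := by
  refine abs_mul_half_pow_le ?_ hx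
  rw [abs_div, abs_pow, abs_neg, abs_one, one_pow, abs_of_pos (by positivity)]
  gcongr
  omega

lemma abs_besselShiftTerm_le {x R : ℝ} (hx : |x| ≤ R) (n m : ℕ) :
    |besselShiftTerm n m x| ≤ (R / 2) ^ n / n ! * (((R / 2) ^ 2) ^ m / m !) := by
  refine abs_mul_half_pow_le ?_ hx
  have hfac : m * n ! ≤ (m + n + 1)! := by
    rw [Nat.factorial_succ]
    exact Nat.mul_le_mul (by omega) (Nat.factorial_le (by omega))
  rw [abs_div, abs_mul, abs_pow, abs_neg, abs_one, one_pow, one_mul, Nat.abs_cast,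
    abs_of_pos (by positivity), div_le_div_iff₀ (by positivity) (by positivity)]
  calc (m : ℝ) * (m ! * n !) = m ! * (m * n ! : ℕ) := by push_cast; ring
    _ ≤ m ! * (m + n + 1)! := by gcongr
    _ = 1 * (m ! * (m + n + 1)!) := (one_mul _).symm

lemma summable_besselMajorant (R : ℝ) (n : ℕ) :
    Summable fun m : ℕ ↦ (R / 2) ^ n / n ! * (((R / 2) ^ 2) ^ m / m !) :=
  (Real.summable_pow_div_factorial _).mul_left _

lemma summable_besselTerm (n : ℕ) (x : ℝ) : Summable fun m ↦ besselTerm n m x :=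
  .of_norm_bounded (summable_besselMajorant |x| n) (abs_besselTerm_le le_rfl n)

lemma summable_besselShiftTerm (n : ℕ) (x : ℝ) : Summable fun m ↦ besselShiftTerm n m x :=
  .of_norm_bounded (summable_besselMajorant |x| n) (abs_besselShiftTerm_le le_rfl n)

lemma abs_besselJ_le {x R : ℝ} (hx : |x| ≤ R) (n : ℕ) :
    |besselJ n x| ≤ (R / 2) ^ n / n ! * Real.exp ((R / 2) ^ 2) := by
  have hexp := Real.exp_eq_exp_ℝ ▸ NormedSpace.expSeries_div_hasSum_exp ((R / 2) ^ 2)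
  rw [besselJ_eq_tsum, ← Real.norm_eq_abs]
  exact tsum_of_norm_bounded (hexp.mul_left _) (abs_besselTerm_le hx n)

lemma besselJ_sq_le {x R : ℝ} (hx : |x| ≤ R) (n : ℕ) :
    besselJ n x ^ 2 ≤ Real.exp ((R / 2) ^ 2) ^ 2 * (((R / 2) ^ 2) ^ n / n !) := by
  have hfac : (n ! : ℝ) ≤ n ! ^ 2 := by
    rw [sq]
    exact le_mul_of_one_le_left (by positivity) (by exact_mod_cast n.factorial_pos)
  calc besselJ n x ^ 2 = |besselJ n x| ^ 2 := (sq_abs _).symm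
    _ ≤ ((R / 2) ^ n / n ! * Real.exp ((R / 2) ^ 2)) ^ 2 := by
      gcongr
      exact abs_besselJ_le hx n
    _ = Real.exp ((R / 2) ^ 2) ^ 2 * (((R / 2) ^ 2) ^ n / n ! ^ 2) := by
      rw [pow_right_comm]; ring
    _ ≤ Real.exp ((R / 2) ^ 2) ^ 2 * (((R / 2) ^ 2) ^ n / n !) := by gcongr

lemma besselShiftTerm_zero (n : ℕ) (x : ℝ) : besselShiftTerm n 0 x = 0 := by
  simp [besselShiftTerm]

lemma besselShiftTerm_succ (n m : ℕ) (x : ℝ) :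
    besselShiftTerm n (m + 1) x = -besselTerm (n + 2) m x := by
  rw [besselShiftTerm, besselTerm, show 2 * (m + 1) + n = 2 * m + (n + 2) by ring,
    show m + 1 + n + 1 = m + (n + 2) by ring, Nat.factorial_succ m]
  push_cast
  field_simp
  ring

lemma tsum_besselShiftTerm (n : ℕ) (x : ℝ) :
    ∑' m, besselShiftTerm n m x = -besselJ (n + 2) x := by
  rw [(summable_besselShiftTerm n x).tsum_eq_zero_add, besselShiftTerm_zero, zero_add,
    tsum_congr (besselShiftTerm_succ n · x), tsum_neg, besselJ_eq_tsum]

lemma mul_besselTerm_sub_besselShiftTerm (n m : ℕ) (x : ℝ) :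
    x * (besselTerm n m x - besselShiftTerm n m x) = 2 * (n + 1) * besselTerm (n + 1) m x := by
  rw [besselTerm, besselShiftTerm, besselTerm, show 2 * m + (n + 1) = 2 * m + n + 1 by ring,
    show m + (n + 1) = m + n + 1 by ring, Nat.factorial_succ (m + n)]
  push_cast
  field_simp
  ring

lemma mul_besselJ_add_besselJ (n : ℕ) (x : ℝ) :
    x * (besselJ n x + besselJ (n + 2) x) = 2 * (n + 1) * besselJ (n + 1) x := by
  rw [← neg_neg (besselJ (n + 2) x), ← tsum_besselShiftTerm, besselJ_eq_tsum, besselJ_eq_tsum,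
    ← sub_eq_add_neg, ← (summable_besselTerm n x).tsum_sub (summable_besselShiftTerm n x),
    ← tsum_mul_left, ← tsum_mul_left]
  exact tsum_congr (mul_besselTerm_sub_besselShiftTerm n · x)

lemma hasDerivAt_besselTerm_succ (n m : ℕ) (x : ℝ) :
    HasDerivAt (besselTerm (n + 1) m) ((besselTerm n m x + besselShiftTerm n m x) / 2) x := by
  have hpow : HasDerivAt (fun w : ℝ ↦ (w / 2) ^ (2 * m + n + 1))
      ((2 * m + n + 1 : ℕ) * (x / 2) ^ (2 * m + n) * (1 / 2)) x := by
    simpa using ((hasDerivAt_id x).div_const 2).fun_pow (2 * m + n + 1)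
  refine (hpow.const_mul ((-1 : ℝ) ^ m / (m ! * (m + n + 1)!))).congr_deriv ?_
  rw [besselTerm, besselShiftTerm, Nat.factorial_succ (m + n)]
  push_cast
  field_simp
  ring

lemma hasDerivAt_besselJ_succ (n : ℕ) (x : ℝ) :
    HasDerivAt (besselJ (n + 1)) ((besselJ n x - besselJ (n + 2) x) / 2) x := by
  have hx : x ∈ Metric.ball (0 : ℝ) (|x| + 1) := by simp
  refine (hasDerivAt_tsum_of_isPreconnected (summable_besselMajorant (|x| + 1) n)
    Metric.isOpen_ball (convex_ball _ _).isPreconnected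
    (fun m y _ ↦ hasDerivAt_besselTerm_succ n m y) (fun m y hy ↦ ?_) hx
    (summable_besselTerm (n + 1) x) hx).congr_deriv ?_
  · have hy : |y| ≤ |x| + 1 := (mem_ball_zero_iff.mp hy).le
    rw [Real.norm_eq_abs, abs_div, abs_two]
    linarith [abs_add_le (besselTerm n m y) (besselShiftTerm n m y),
      abs_besselTerm_le hy n m, abs_besselShiftTerm_le hy n m]
  · rw [tsum_div_const, (summable_besselTerm n x).tsum_add (summable_besselShiftTerm n x),
      tsum_besselShiftTerm, ← besselJ_eq_tsum, sub_eq_add_neg]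

lemma hasDerivAt_mul_besselJ_sq (n : ℕ) (x : ℝ) :
    HasDerivAt (fun w ↦ 4 * ((n + 1 : ℕ) : ℝ) * besselJ (n + 1) w ^ 2)
      (2 * x * (besselJ n x ^ 2 - besselJ (n + 2) x ^ 2)) x := by
  refine (((hasDerivAt_besselJ_succ n x).pow 2).const_mul _).congr_deriv ?_
  push_cast
  linear_combination -2 * (besselJ n x - besselJ (n + 2) x) * mul_besselJ_add_besselJ n x

lemma tsum_sub_nat_add {G : Type*} [AddCommGroup G] [TopologicalSpace G] [IsTopologicalAddGroup G]
    [T2Space G] {f : ℕ → G} (hf : Summable f) (k : ℕ) :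
    ∑' n, (f n - f (n + k)) = ∑ i ∈ Finset.range k, f i := by
  rw [hf.tsum_sub ((summable_nat_add_iff k).2 hf), ← hf.sum_add_tsum_nat_add k, add_sub_cancel_right]

lemma besselJ_zero_right {n : ℕ} (hn : n ≠ 0) : besselJ n 0 = 0 := by
  simp [besselJ, hn]

lemma hasDerivAt_tsum_mul_besselJ_sq (K : ℕ) (x : ℝ) :
    HasDerivAt (fun w ↦ ∑' n : ℕ, 4 * ((n + K + 2 : ℕ) : ℝ) * besselJ (n + K + 2) w ^ 2)
      (∑' n : ℕ, 2 * x * (besselJ (n + K + 1) x ^ 2 - besselJ (n + K + 3) x ^ 2)) x := by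
  set R := |x| + 1
  set C := Real.exp ((R / 2) ^ 2) ^ 2
  set a := (R / 2) ^ 2
  have hsum : Summable fun k ↦ C * (a ^ k / k !) := (Real.summable_pow_div_factorial a).mul_left C
  have hx : x ∈ Metric.ball (0 : ℝ) R := by simp [R]
  refine hasDerivAt_tsum_of_isPreconnected
    (g' := fun n y ↦ 2 * y * (besselJ (n + K + 1) y ^ 2 - besselJ (n + K + 3) y ^ 2))
    ((((summable_nat_add_iff (K + 1)).2 hsum).add ((summable_nat_add_iff (K + 3)).2 hsum)).mul_left
      (2 * R)) Metric.isOpen_ball (convex_ball _ _).isPreconnected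
    (fun n y _ ↦ hasDerivAt_mul_besselJ_sq (n + K + 1) y) (fun n y hy ↦ ?_)
    (Metric.mem_ball_self (by positivity)) (by simp [besselJ_zero_right]) hx
  have hy : |y| ≤ R := (mem_ball_zero_iff.mp hy).le
  have hdiff : |besselJ (n + K + 1) y ^ 2 - besselJ (n + K + 3) y ^ 2|
      ≤ besselJ (n + K + 1) y ^ 2 + besselJ (n + K + 3) y ^ 2 :=
    abs_le.mpr ⟨by linarith [sq_nonneg (besselJ (n + K + 1) y)],
      by linarith [sq_nonneg (besselJ (n + K + 3) y)]⟩
  rw [Real.norm_eq_abs, abs_mul, abs_mul, abs_two]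
  gcongr
  exact hdiff.trans (add_le_add (besselJ_sq_le hy _) (besselJ_sq_le hy _))

theorem deriv_tail_sum_4n_besselJ_sq_general (K : ℕ) (z : ℝ) :
    HasDerivAt (fun w => ∑' n : ℕ, 4 * ((n + K + 2 : ℕ) : ℝ) * besselJ (n + K + 2) w ^ 2)
      (2 * z * (besselJ (K + 1) z ^ 2 + besselJ (K + 2) z ^ 2)) z := by
  have hsq : Summable fun n ↦ besselJ (n + K + 1) z ^ 2 :=
    (summable_nat_add_iff (K + 1)).2 <| .of_nonneg_of_le (fun _ ↦ sq_nonneg _)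
      (besselJ_sq_le le_rfl) ((Real.summable_pow_div_factorial _).mul_left _)
  have htel := tsum_sub_nat_add hsq 2
  simp only [Finset.sum_range_succ, Finset.sum_range_zero, zero_add,
    show ∀ n, n + 2 + K + 1 = n + K + 3 from fun n ↦ by ring, show 1 + K + 1 = K + 2 by ring]
    at htel
  convert hasDerivAt_tsum_mul_besselJ_sq K z using 1
  rw [tsum_mul_left, htel]

theorem deriv_tail_sum_4n_besselJ_sq (K : ℕ) (z : ℝ) (hz : 0 < z) :
    HasDerivAt (fun w => ∑' n : ℕ, 4 * ((n + K + 2 : ℕ) : ℝ) * besselJ (n + K + 2) w ^ 2)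
      (2 * z * (besselJ (K + 1) z ^ 2 + besselJ (K + 2) z ^ 2)) z :=
  deriv_tail_sum_4n_besselJ_sq_general K z
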